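/- arXiv:2012.12898 — 11 statements merged into one kernel-verified Lean document; each statement's English description precedes it below -/
import Mathlib

section
/- Let F : ℕ → ℝ[X] (polynomials in x) satisfy F(0) = 1, F(1) = 4x² + 2x, F(2) = 16x⁴ + 12x³ + 4x², and F(n) = (4x² + 3x)·F(n−1) − (8x³ + 2x²)·F(n−2) + 4x³·F(n−3) for n ≥ 3. Then the generating function identity holds: (1 − ((4x²+3x)t − (8x³+2x²)t² + 4x³t³)) · Σ_{n≥0} F(n) t^n = 1 − x·t as formal power series in t over ℝ[X]. -/
/-!
Multiplying the generating series of a third-order linear recurrence by `1 - a t - b t² - c t³`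
kills every coefficient from `t³` on, by the recurrence itself. What survives is a quadratic in
`t` built from the initial values, and for `F 0 = 1`, `F 1`, `F 2` as given it is `1 - x t`.
-/

open Polynomial

namespace PowerSeries

variable {R : Type*} [CommRing R]

theorem mul_mk_of_linearRecurrence (a b c : R) (F : ℕ → R)
    (hrec : ∀ n, F (n + 3) = a * F (n + 2) + b * F (n + 1) + c * F n) :
    (1 - (C a * X + C b * X ^ 2 + C c * X ^ 3) : R⟦X⟧) * mk F
      = C (F 0) + C (F 1 - a * F 0) * X + C (F 2 - a * F 1 - b * F 0) * X ^ 2 := by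
  have expand : (1 - (C a * X + C b * X ^ 2 + C c * X ^ 3)) * mk F
      = mk F - C a * (X ^ 1 * mk F) - C b * (X ^ 2 * mk F) - C c * (X ^ 3 * mk F) := by
    ring
  rw [expand]
  ext n
  simp only [map_sub, map_add, sub_mul, mul_assoc, coeff_C_mul, coeff_X_pow_mul', coeff_mk,
    coeff_C, coeff_X, coeff_X_pow]
  rcases n with _ | _ | _ | m
  · simp
  · simp
  · simp
  · simp [hrec m]
    ring

end PowerSeries

theorem stmt_2 (F : ℕ → Polynomial ℝ)
    (h0 : F 0 = 1)
    (h1 : F 1 = 4 * X ^ 2 + 2 * X)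
    (h2 : F 2 = 16 * X ^ 4 + 12 * X ^ 3 + 4 * X ^ 2)
    (hrec : ∀ n, 3 ≤ n → F n = (4 * X ^ 2 + 3 * X) * F (n - 1)
      - (8 * X ^ 3 + 2 * X ^ 2) * F (n - 2) + 4 * X ^ 3 * F (n - 3)) :
    (1 - (PowerSeries.C (4 * X ^ 2 + 3 * X) * PowerSeries.X
        - PowerSeries.C (8 * X ^ 3 + 2 * X ^ 2) * PowerSeries.X ^ 2
        + PowerSeries.C (4 * X ^ 3) * PowerSeries.X ^ 3))
      * PowerSeries.mk (fun n => F n)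
    = 1 - PowerSeries.C X * PowerSeries.X := by
  have hrec' : ∀ n, F (n + 3) = (4 * X ^ 2 + 3 * X) * F (n + 2)
      + -(8 * X ^ 3 + 2 * X ^ 2) * F (n + 1) + 4 * X ^ 3 * F n := fun n => by
    rw [hrec (n + 3) (by omega)]
    simp only [Nat.add_sub_cancel, show n + 3 - 1 = n + 2 by omega, show n + 3 - 2 = n + 1 by omega]
    ring
  have initial₁ : F 1 - (4 * X ^ 2 + 3 * X) * F 0 = -X := by rw [h0, h1]; ring
  have initial₂ : F 2 - (4 * X ^ 2 + 3 * X) * F 1 - -(8 * X ^ 3 + 2 * X ^ 2) * F 0 = 0 := by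
    rw [h0, h1, h2]; ring
  calc _ = _ := by rw [map_neg]; ring
    _ = _ := PowerSeries.mul_mk_of_linearRecurrence _ _ _ F hrec'
    _ = 1 - PowerSeries.C X * PowerSeries.X := by
      rw [initial₁, initial₂, h0, map_neg, map_zero, map_one]; ring
end

section
/- Let F : ℕ → ℝ[X] satisfy the recurrence F(n) = (4x²+3x)F(n−1) − (8x³+2x²)F(n−2) + 4x³F(n−3) with F(0)=1, F(1)=4x²+2x, F(2)=16x⁴+12x³+4x². Then for every n ≥ 1, the degree of F(n) is 2n, the leading coefficient of F(n) is 4^n, and the smallest exponent with nonzero coefficient in F(n) is n. -/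
open Polynomial

lemma coeff_CXpow_mul (c : ℝ) (k m : ℕ) (G : ℝ[X]) :
    (C c * X ^ k * G).coeff m = if k ≤ m then c * G.coeff (m - k) else 0 := by
  rw [mul_assoc, X_pow_mul, ← mul_assoc, coeff_mul_X_pow']
  split <;> simp [coeff_C_mul]

theorem stmt_4 (F : ℕ → Polynomial ℝ)
    (h0 : F 0 = 1)
    (h1 : F 1 = 4 * X ^ 2 + 2 * X)
    (h2 : F 2 = 16 * X ^ 4 + 12 * X ^ 3 + 4 * X ^ 2)
    (hrec : ∀ n, 3 ≤ n → F n = (4 * X ^ 2 + 3 * X) * F (n - 1)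
      - (8 * X ^ 3 + 2 * X ^ 2) * F (n - 2) + 4 * X ^ 3 * F (n - 3)) :
    ∀ n, 1 ≤ n →
      (F n).natDegree = 2 * n ∧ (F n).leadingCoeff = 4 ^ n ∧
      (F n).coeff n ≠ 0 ∧ ∀ m < n, (F n).coeff m = 0 := by
  have h1' : F 1 = C 4 * X ^ 2 + C 2 * X ^ 1 := by
    rw [h1, ← map_ofNat (C : ℝ →+* ℝ[X]) 4, ← map_ofNat (C : ℝ →+* ℝ[X]) 2, pow_one]
  have h2' : F 2 = C 16 * X ^ 4 + C 12 * X ^ 3 + C 4 * X ^ 2 := by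
    rw [h2, ← map_ofNat (C : ℝ →+* ℝ[X]) 16, ← map_ofNat (C : ℝ →+* ℝ[X]) 12,
      ← map_ofNat (C : ℝ →+* ℝ[X]) 4]
  have key : ∀ n, (F n).natDegree = 2 * n ∧ (F n).coeff (2 * n) = 4 ^ n ∧
      (∀ m < n, (F n).coeff m = 0) ∧ 0 < (F n).coeff n ∧
      (F (n - 1)).coeff (n - 1) ≤ (F n).coeff n := by
    intro n
    induction n using Nat.strong_induction_on with
    | _ n ih =>
      match n with
      | 0 =>
        refine ⟨?_, ?_, ?_, ?_, ?_⟩ <;> simp [h0]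
      | 1 =>
        refine ⟨?_, ?_, ?_, ?_, ?_⟩
        · rw [h1']; compute_degree!
        · rw [h1']; norm_num [coeff_add, coeff_C_mul, coeff_X_pow]
        · intro m hm
          interval_cases m
          rw [h1']; norm_num [coeff_add, coeff_C_mul, coeff_X_pow]
        · rw [h1']; norm_num [coeff_add, coeff_C_mul, coeff_X_pow]
        · rw [h1']
          norm_num [h0, coeff_add, coeff_C_mul, coeff_X_pow]
      | 2 =>
        refine ⟨?_, ?_, ?_, ?_, ?_⟩
        · rw [h2']; compute_degree!
        · rw [h2']; norm_num [coeff_add, coeff_C_mul, coeff_X_pow]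
        · intro m hm
          interval_cases m <;>
            · rw [h2']; norm_num [coeff_add, coeff_C_mul, coeff_X_pow]
        · rw [h2']; norm_num [coeff_add, coeff_C_mul, coeff_X_pow]
        · rw [h1', h2']
          norm_num [coeff_add, coeff_C_mul, coeff_X_pow]
      | (a + 3) =>
        obtain ⟨d1, c1, z1, p1, m1⟩ := ih (a + 2) (by omega)
        obtain ⟨d2, c2, z2, p2, _⟩ := ih (a + 1) (by omega)
        obtain ⟨d3, c3, z3, p3, _⟩ := ih a (by omega)
        rw [show a + 2 - 1 = a + 1 by omega] at m1
        have e := hrec (a + 3) (by omega)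
        rw [show a + 3 - 1 = a + 2 by omega, show a + 3 - 2 = a + 1 by omega,
          show a + 3 - 3 = a by omega,
          show (4 * X ^ 2 + 3 * X : ℝ[X]) = C 4 * X ^ 2 + C 3 * X ^ 1 by
            rw [← map_ofNat (C : ℝ →+* ℝ[X]) 4, ← map_ofNat (C : ℝ →+* ℝ[X]) 3, pow_one],
          show (8 * X ^ 3 + 2 * X ^ 2 : ℝ[X]) = C 8 * X ^ 3 + C 2 * X ^ 2 by
            rw [← map_ofNat (C : ℝ →+* ℝ[X]) 8, ← map_ofNat (C : ℝ →+* ℝ[X]) 2],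
          show (4 * X ^ 3 : ℝ[X]) = C 4 * X ^ 3 by
            rw [← map_ofNat (C : ℝ →+* ℝ[X]) 4]] at e
        have hcoeff : ∀ m, (F (a + 3)).coeff m =
            (if 2 ≤ m then 4 * (F (a + 2)).coeff (m - 2) else 0)
            + (if 1 ≤ m then 3 * (F (a + 2)).coeff (m - 1) else 0)
            - ((if 3 ≤ m then 8 * (F (a + 1)).coeff (m - 3) else 0)
              + (if 2 ≤ m then 2 * (F (a + 1)).coeff (m - 2) else 0))
            + (if 3 ≤ m then 4 * (F a).coeff (m - 3) else 0) := by
          intro m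
          rw [e]
          simp only [coeff_add, coeff_sub, add_mul, coeff_CXpow_mul]
        have zz1 : ∀ k, 2 * (a + 2) < k → (F (a + 2)).coeff k = 0 := fun k hk =>
          coeff_eq_zero_of_natDegree_lt (by rw [d1]; exact hk)
        have zz2 : ∀ k, 2 * (a + 1) < k → (F (a + 1)).coeff k = 0 := fun k hk =>
          coeff_eq_zero_of_natDegree_lt (by rw [d2]; exact hk)
        have zz3 : ∀ k, 2 * a < k → (F a).coeff k = 0 := fun k hk =>
          coeff_eq_zero_of_natDegree_lt (by rw [d3]; exact hk)
        have ctop : (F (a + 3)).coeff (2 * (a + 3)) = 4 ^ (a + 3) := by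
          rw [hcoeff, if_pos (by omega : 2 ≤ 2 * (a + 3)),
            if_pos (by omega : 1 ≤ 2 * (a + 3)), if_pos (by omega : 3 ≤ 2 * (a + 3)),
            show 2 * (a + 3) - 2 = 2 * (a + 2) by omega, c1,
            zz1 _ (by omega), zz2 _ (by omega), zz2 _ (by omega), zz3 _ (by omega)]
          split_ifs <;> first | ring1 | (exfalso; omega)
        have hdle : (F (a + 3)).natDegree ≤ 2 * (a + 3) := by
          rw [natDegree_le_iff_coeff_eq_zero]
          intro m hm
          rw [hcoeff, zz1 _ (by omega), zz1 _ (by omega), zz2 _ (by omega),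
            zz2 _ (by omega), zz3 _ (by omega)]
          simp
        have hdeg : (F (a + 3)).natDegree = 2 * (a + 3) := by
          refine le_antisymm hdle (le_natDegree_of_ne_zero ?_)
          rw [ctop]; positivity
        have clow : ∀ m < a + 3, (F (a + 3)).coeff m = 0 := by
          intro m hm
          rw [hcoeff, z1 _ (by omega), z1 _ (by omega), z2 _ (by omega), z2 _ (by omega)]
          by_cases h3 : 3 ≤ m
          · rw [z3 _ (by omega)]; simp
          · simp [h3]
        have ct : (F (a + 3)).coeff (a + 3) =
            3 * (F (a + 2)).coeff (a + 2) - 2 * (F (a + 1)).coeff (a + 1)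
              + 4 * (F a).coeff a := by
          rw [hcoeff, if_pos (by omega : 2 ≤ a + 3), if_pos (by omega : 1 ≤ a + 3),
            if_pos (by omega : 3 ≤ a + 3),
            show a + 3 - 2 = a + 1 by omega, show a + 3 - 1 = a + 2 by omega,
            show a + 3 - 3 = a by omega, z1 _ (by omega), z2 _ (by omega)]
          split_ifs <;> first | ring1 | (exfalso; omega)
        refine ⟨hdeg, ctop, clow, ?_, ?_⟩
        · rw [ct]; linarith
        · rw [show a + 3 - 1 = a + 2 by omega, ct]; linarith
  intro n hn
  obtain ⟨d, c, z, p, -⟩ := key n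
  exact ⟨d, by rw [leadingCoeff, d]; exact c, p.ne', z⟩
end

section
/- Let F : ℕ → ℝ[X] satisfy F(n) = (4x²+3x)F(n−1) − (8x³+2x²)F(n−2) + 4x³F(n−3) with F(0)=1, F(1)=4x²+2x, F(2)=16x⁴+12x³+4x². Then for every n ≥ 1 and every integer m with n ≤ m ≤ 2n, the coefficient of x^m in F(n) is strictly positive. -/
open Polynomial

theorem stmt_5 (F : ℕ → Polynomial ℝ)
    (h0 : F 0 = 1)
    (h1 : F 1 = 4 * X ^ 2 + 2 * X)
    (h2 : F 2 = 16 * X ^ 4 + 12 * X ^ 3 + 4 * X ^ 2)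
    (hrec : ∀ n, 3 ≤ n → F n = (4 * X ^ 2 + 3 * X) * F (n - 1)
      - (8 * X ^ 3 + 2 * X ^ 2) * F (n - 2) + 4 * X ^ 3 * F (n - 3)) :
    ∀ n, 1 ≤ n → ∀ m : ℕ, n ≤ m → m ≤ 2 * n → 0 < (F n).coeff m := by
  have hC : ∀ (c : ℝ) (k : ℕ) (p : Polynomial ℝ) (m : ℕ),
      (C c * (X ^ k * p)).coeff m = c * (if k ≤ m then p.coeff (m - k) else 0) := by
    intro c k p m
    rw [coeff_C_mul, coeff_X_pow_mul']
  -- coefficient tables of the base cases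
  have e0 : ∀ m : ℕ, (F 0).coeff m = if m = 0 then 1 else 0 := by
    intro m
    rw [h0]
    simp [coeff_one]
  have e1 : ∀ m : ℕ, (F 1).coeff m = if m = 1 then 2 else if m = 2 then 4 else 0 := by
    intro m
    rw [h1, show (4:Polynomial ℝ) = C 4 by norm_cast, show (2:Polynomial ℝ) = C 2 by norm_cast]
    simp only [coeff_add, coeff_C_mul, coeff_X_pow, coeff_X]
    split_ifs <;> first | omega | norm_num
  have e2 : ∀ m : ℕ, (F 2).coeff m =
      if m = 2 then 4 else if m = 3 then 12 else if m = 4 then 16 else 0 := by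
    intro m
    rw [h2, show (16:Polynomial ℝ) = C 16 by norm_cast,
      show (12:Polynomial ℝ) = C 12 by norm_cast, show (4:Polynomial ℝ) = C 4 by norm_cast]
    simp only [coeff_add, coeff_C_mul, coeff_X_pow]
    split_ifs <;> first | omega | norm_num
  -- the recurrence on coefficients
  have key : ∀ n, 3 ≤ n → ∀ m : ℕ, (F n).coeff m =
      4 * (if 2 ≤ m then (F (n-1)).coeff (m-2) else 0)
      + 3 * (if 1 ≤ m then (F (n-1)).coeff (m-1) else 0)
      - 8 * (if 3 ≤ m then (F (n-2)).coeff (m-3) else 0)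
      - 2 * (if 2 ≤ m then (F (n-2)).coeff (m-2) else 0)
      + 4 * (if 3 ≤ m then (F (n-3)).coeff (m-3) else 0) := by
    intro n hn m
    have e : F n = C 4 * (X^2 * F (n-1)) + C 3 * (X^1 * F (n-1)) - C 8 * (X^3 * F (n-2))
        - C 2 * (X^2 * F (n-2)) + C 4 * (X^3 * F (n-3)) := by
      rw [hrec n hn]
      simp only [show (4:Polynomial ℝ)=C 4 by norm_cast, show (3:Polynomial ℝ)=C 3 by norm_cast,
        show (8:Polynomial ℝ)=C 8 by norm_cast, show (2:Polynomial ℝ)=C 2 by norm_cast]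
      ring
    rw [e]
    simp only [coeff_add, coeff_sub, hC]
  -- main induction
  have main : ∀ n : ℕ,
      (∀ m, m < n → (F n).coeff m = 0) ∧
      (∀ m, 2*n < m → (F n).coeff m = 0) ∧
      (∀ m, 0 ≤ (F n).coeff m) ∧
      (1 ≤ n → ∀ m, 1 ≤ m → 2 * (F (n-1)).coeff (m-1) ≤ (F n).coeff m) ∧
      (1 ≤ n → ∀ m, n ≤ m → m ≤ 2*n → 0 < (F n).coeff m) := by
    intro n
    induction n using Nat.strong_induction_on with
    | _ n ih =>
      match n, ih with
      | 0, _ =>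
        refine ⟨fun m hm => by omega, fun m hm => ?_, fun m => ?_, fun h => by omega,
          fun h => by omega⟩
        · rw [e0 m]; split_ifs <;> first | omega | norm_num
        · rw [e0 m]; split_ifs <;> norm_num
      | 1, _ =>
        refine ⟨fun m hm => ?_, fun m hm => ?_, fun m => ?_, fun _ m hm => ?_,
          fun _ m hm1 hm2 => ?_⟩
        · rw [e1 m]; split_ifs <;> first | omega | norm_num
        · rw [e1 m]; split_ifs <;> first | omega | norm_num
        · rw [e1 m]; split_ifs <;> norm_num
        · show 2 * (F 0).coeff (m-1) ≤ (F 1).coeff m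
          rw [e0, e1]; split_ifs <;> first | omega | norm_num
        · rw [e1 m]; split_ifs <;> first | omega | norm_num
      | 2, _ =>
        refine ⟨fun m hm => ?_, fun m hm => ?_, fun m => ?_, fun _ m hm => ?_,
          fun _ m hm1 hm2 => ?_⟩
        · rw [e2 m]; split_ifs <;> first | omega | norm_num
        · rw [e2 m]; split_ifs <;> first | omega | norm_num
        · rw [e2 m]; split_ifs <;> norm_num
        · show 2 * (F 1).coeff (m-1) ≤ (F 2).coeff m
          rw [e1, e2]; split_ifs <;> first | omega | norm_num
        · rw [e2 m]; split_ifs <;> first | omega | norm_num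
      | (k+3), ih =>
        obtain ⟨lo1, hi1, nn1, d1, pos1⟩ := ih (k+2) (by omega)
        obtain ⟨lo2, hi2, nn2, d2, pos2⟩ := ih (k+1) (by omega)
        obtain ⟨lo3, hi3, nn3, d3, pos3⟩ := ih k (by omega)
        have d1' : ∀ m, 1 ≤ m → 2 * (F (k+1)).coeff (m-1) ≤ (F (k+2)).coeff m := by
          intro m hm
          have := d1 (by omega) m hm
          simpa using this
        have K := key (k+3) (by omega)
        simp only [show k+3-1 = k+2 from rfl, show k+3-2 = k+1 from rfl,
          show k+3-3 = k from rfl] at K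
        -- low vanishing
        have Hlo : ∀ m, m < k+3 → (F (k+3)).coeff m = 0 := by
          intro m hm
          have z1 : (if 2 ≤ m then (F (k+2)).coeff (m-2) else 0) = 0 := by
            split_ifs with h
            · exact lo1 _ (by omega)
            · rfl
          have z2 : (if 1 ≤ m then (F (k+2)).coeff (m-1) else 0) = 0 := by
            split_ifs with h
            · exact lo1 _ (by omega)
            · rfl
          have z3 : (if 3 ≤ m then (F (k+1)).coeff (m-3) else 0) = 0 := by
            split_ifs with h
            · exact lo2 _ (by omega)
            · rfl
          have z4 : (if 2 ≤ m then (F (k+1)).coeff (m-2) else 0) = 0 := by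
            split_ifs with h
            · exact lo2 _ (by omega)
            · rfl
          have z5 : (if 3 ≤ m then (F k).coeff (m-3) else 0) = 0 := by
            split_ifs with h
            · exact lo3 _ (by omega)
            · rfl
          rw [K m, z1, z2, z3, z4, z5]; ring
        -- high vanishing
        have Hhi : ∀ m, 2*(k+3) < m → (F (k+3)).coeff m = 0 := by
          intro m hm
          have z1 : (if 2 ≤ m then (F (k+2)).coeff (m-2) else 0) = 0 := by
            rw [if_pos (by omega : 2 ≤ m)]; exact hi1 _ (by omega)
          have z2 : (if 1 ≤ m then (F (k+2)).coeff (m-1) else 0) = 0 := by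
            rw [if_pos (by omega : 1 ≤ m)]; exact hi1 _ (by omega)
          have z3 : (if 3 ≤ m then (F (k+1)).coeff (m-3) else 0) = 0 := by
            rw [if_pos (by omega : 3 ≤ m)]; exact hi2 _ (by omega)
          have z4 : (if 2 ≤ m then (F (k+1)).coeff (m-2) else 0) = 0 := by
            rw [if_pos (by omega : 2 ≤ m)]; exact hi2 _ (by omega)
          have z5 : (if 3 ≤ m then (F k).coeff (m-3) else 0) = 0 := by
            rw [if_pos (by omega : 3 ≤ m)]; exact hi3 _ (by omega)
          rw [K m, z1, z2, z3, z4, z5]; ring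
        -- domination
        have Hd : ∀ m, 1 ≤ m → 2 * (F (k+2)).coeff (m-1) ≤ (F (k+3)).coeff m := by
          intro m hm
          by_cases h3 : 3 ≤ m
          · rw [K m, if_pos (by omega : 2 ≤ m), if_pos (by omega : 1 ≤ m),
              if_pos h3, if_pos (by omega : 2 ≤ m), if_pos h3]
            have hA := d1' (m-2) (by omega)
            have hB := d1' (m-1) (by omega)
            simp only [show m-2-1 = m-3 from rfl, show m-1-1 = m-2 from rfl] at hA hB
            have hE := nn3 (m-3)
            linarith
          · have hz : (F (k+3)).coeff m = 0 := Hlo m (by omega)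
            have hz' : (F (k+2)).coeff (m-1) = 0 := lo1 _ (by omega)
            rw [hz, hz']; norm_num
        -- nonnegativity
        have Hnn : ∀ m, 0 ≤ (F (k+3)).coeff m := by
          intro m
          by_cases hm : 1 ≤ m
          · have := Hd m hm
            have := nn1 (m-1)
            linarith
          · have : m = 0 := by omega
            rw [this, Hlo 0 (by omega)]
        refine ⟨Hlo, Hhi, Hnn, fun _ m hm => ?_, fun _ m hm1 hm2 => ?_⟩
        · simpa using Hd m hm
        · by_cases hm : m < 2*k+6
          · have h1 := Hd m (by omega)
            have h2 := pos1 (by omega) (m-1) (by omega) (by omega)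
            linarith
          · have hm' : m = 2*k+6 := by omega
            subst hm'
            rw [K (2*k+6), if_pos (by omega : 2 ≤ 2*k+6), if_pos (by omega : 1 ≤ 2*k+6),
              if_pos (by omega : 3 ≤ 2*k+6), if_pos (by omega : 2 ≤ 2*k+6),
              if_pos (by omega : 3 ≤ 2*k+6)]
            have r1 : 2*k+6-1 = 2*k+5 := by omega
            have r2 : 2*k+6-2 = 2*k+4 := by omega
            have r3 : 2*k+6-3 = 2*k+3 := by omega
            rw [r1, r2, r3]
            have z2 : (F (k+2)).coeff (2*k+5) = 0 := hi1 _ (by omega)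
            have z3 : (F (k+1)).coeff (2*k+3) = 0 := hi2 _ (by omega)
            have z4 : (F (k+1)).coeff (2*k+4) = 0 := hi2 _ (by omega)
            have z5 : (F k).coeff (2*k+3) = 0 := hi3 _ (by omega)
            have t1 : 0 < (F (k+2)).coeff (2*k+4) := pos1 (by omega) _ (by omega) (by omega)
            rw [z2, z3, z4, z5]
            linarith
  exact fun n hn m hm1 hm2 => (main n).2.2.2.2 hn m hm1 hm2
end

section
/- Define IDF : ℕ → ℝ by IDF(n) = (d/dx F(n))(1), where F : ℕ → ℝ[X] satisfies F(n) = (4x²+3x)F(n−1) − (8x³+2x²)F(n−2) + 4x³F(n−3) with F(0)=1, F(1)=4x²+2x, F(2)=16x⁴+12x³+4x². Then IDF(n) = −4 + ((50+22√5)/25)(3−√5)^n + ((13−3√5)/10)·n·(3−√5)^n + ((50−22√5)/25)(3+√5)^n + ((13+3√5)/10)·n·(3+√5)^n for all n ≥ 0. -/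
open Polynomial

theorem stmt_6 (F : ℕ → Polynomial ℝ)
    (h0 : F 0 = 1)
    (h1 : F 1 = 4 * X ^ 2 + 2 * X)
    (h2 : F 2 = 16 * X ^ 4 + 12 * X ^ 3 + 4 * X ^ 2)
    (hrec : ∀ n, 3 ≤ n → F n = (4 * X ^ 2 + 3 * X) * F (n - 1)
      - (8 * X ^ 3 + 2 * X ^ 2) * F (n - 2) + 4 * X ^ 3 * F (n - 3))
    (IDF : ℕ → ℝ)
    (hIDF : ∀ n, IDF n = (Polynomial.derivative (F n)).eval 1) :
    ∀ n : ℕ, IDF n = -4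
      + (50 + 22 * Real.sqrt 5) / 25 * (3 - Real.sqrt 5) ^ n
      + (13 - 3 * Real.sqrt 5) / 10 * n * (3 - Real.sqrt 5) ^ n
      + (50 - 22 * Real.sqrt 5) / 25 * (3 + Real.sqrt 5) ^ n
      + (13 + 3 * Real.sqrt 5) / 10 * n * (3 + Real.sqrt 5) ^ n := by
  set t : ℝ := Real.sqrt 5 with htdef
  have ht : t ^ 2 = 5 := Real.sq_sqrt (by norm_num)
  have key : ∀ n : ℕ,
      (F n).eval 1 = (5 - 3*t)/10 * (3-t)^n + (5+3*t)/10 * (3+t)^n ∧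
      (Polynomial.derivative (F n)).eval 1 = -4 + (50+22*t)/25*(3-t)^n
        + (13-3*t)/10*(n:ℝ)*(3-t)^n + (50-22*t)/25*(3+t)^n
        + (13+3*t)/10*(n:ℝ)*(3+t)^n := by
    intro n
    induction n using Nat.strong_induction_on with
    | _ n ih =>
      match n with
      | 0 =>
        constructor
        · simp [h0]; ring
        · simp [h0]
          ring
      | 1 =>
        constructor
        · simp [h1]
          linear_combination (-3/5 : ℝ) * ht
        · simp [h1]
          linear_combination (29/25 : ℝ) * ht
      | 2 =>
        constructor
        · simp [h2]
          linear_combination (-23/5 : ℝ) * ht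
        · simp [h2]
          linear_combination (-146/25 : ℝ) * ht
      | (k+3) =>
        obtain ⟨iha0, ihb0⟩ := ih k (by omega)
        obtain ⟨iha1, ihb1⟩ := ih (k+1) (by omega)
        obtain ⟨iha2, ihb2⟩ := ih (k+2) (by omega)
        have h := hrec (k+3) (by omega)
        have ha := congrArg (Polynomial.eval (1:ℝ)) h
        have hb := congrArg (fun p => (Polynomial.derivative p).eval (1:ℝ)) h
        simp only [eval_add, eval_sub, eval_mul, eval_pow, eval_X, eval_ofNat,
          one_pow, mul_one] at ha
        simp only [derivative_add, derivative_sub, derivative_mul, derivative_pow,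
          derivative_X, derivative_ofNat, eval_add, eval_sub, eval_mul, eval_pow,
          eval_X, eval_ofNat, eval_one, one_pow, mul_one] at hb
        simp only [show k+3-1=k+2 from rfl, show k+3-2=k+1 from rfl,
          show k+3-3=k from rfl] at ha hb
        norm_num at ha hb
        constructor
        · linear_combination ha + 7 * iha2 - 10 * iha1 + 4 * iha0
            - ((1 - (11/10)*t + (3/10)*t^2) * (3-t)^k
              + (1 + (11/10)*t + (3/10)*t^2) * (3+t)^k) * ht
        · push_cast
          push_cast at ihb0 ihb1 ihb2
          linear_combination hb + 11 * iha2 + 7 * ihb2 - 28 * iha1 - 10 * ihb1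
            + 12 * iha0 + 4 * ihb0
            - ((53/5 + (13/5)*(k:ℝ) - (237/50)*t - (19/10)*t*(k:ℝ)
                + (1/50)*t^2 + (3/10)*t^2*(k:ℝ)) * (3-t)^k
              + (53/5 + (13/5)*(k:ℝ) + (237/50)*t + (19/10)*t*(k:ℝ)
                + (1/50)*t^2 + (3/10)*t^2*(k:ℝ)) * (3+t)^k) * ht
  intro n
  rw [hIDF]
  exact (key n).2
end

section
/- Let Φ : ℕ → ℝ satisfy Φ(0)=1, Φ(1)=6, Φ(n)=6Φ(n−1)−4Φ(n−2), and let IDF : ℕ → ℝ be given by IDF(n) = −4 + ((50+22√5)/25)(3−√5)^n + ((13−3√5)/10)n(3−√5)^n + ((50−22√5)/25)(3+√5)^n + ((13+3√5)/10)n(3+√5)^n. Then lim_{n→∞} IDF(n)/(n·Φ(n)) = (−5 + 6√5)/5. -/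
/-!
The recurrence has characteristic roots `3 ± √5`, so `Φ n = A (3+√5)^n + B (3-√5)^n` with
`A = (5+3√5)/10`. Dividing by `(3+√5)^n` (and by `n` for `IDF`), every term except the leading
ones tends to `0`, so `IDF n / (n Φ n)` tends to `((13+3√5)/10) / A = (-5+6√5)/5`.
-/

open Filter Topology

theorem eq_add_mul_pow_of_recurrence {u : ℕ → ℝ} {p q α β A B : ℝ}
    (hα : α ^ 2 = p * α - q) (hβ : β ^ 2 = p * β - q)
    (h0 : u 0 = A + B) (h1 : u 1 = A * α + B * β)
    (hu : ∀ n, u (n + 2) = p * u (n + 1) - q * u n) (n : ℕ) :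
    u n = A * α ^ n + B * β ^ n := by
  induction n using Nat.twoStepInduction with
  | zero => simp [h0]
  | one => simp [h1]
  | more n ih₀ ih₁ =>
    rw [hu, ih₀, ih₁]
    linear_combination (-A * α ^ n) * hα + (-B * β ^ n) * hβ

theorem tendsto_pow_div_pow_of_abs_lt {α β : ℝ} (h : |β| < α) :
    Tendsto (fun n : ℕ => β ^ n / α ^ n) atTop (𝓝 0) := by
  have hα : 0 < α := (abs_nonneg β).trans_lt h
  have hratio : |β / α| < 1 := by
    rw [abs_div, abs_of_pos hα, div_lt_one hα]
    exact h
  simpa only [div_pow] using tendsto_pow_atTop_nhds_zero_of_abs_lt_one hratio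

theorem tendsto_add_mul_pow_div_pow {α β : ℝ} (h : |β| < α) (A B : ℝ) :
    Tendsto (fun n : ℕ => (A * α ^ n + B * β ^ n) / α ^ n) atTop (𝓝 A) := by
  have hα : 0 < α := (abs_nonneg β).trans_lt h
  have hlim := tendsto_const_nhds (x := A).add
    ((tendsto_pow_div_pow_of_abs_lt h).const_mul B)
  rw [mul_zero, add_zero] at hlim
  refine hlim.congr fun n => ?_
  have : α ^ n ≠ 0 := pow_ne_zero n hα.ne'
  field_simp

theorem tendsto_div_natCast_mul_pow {α β : ℝ} (h : |β| < α) (h1 : 1 < α) (e a b c d : ℝ) :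
    Tendsto (fun n : ℕ =>
        (e + a * β ^ n + b * n * β ^ n + c * α ^ n + d * n * α ^ n) / (n * α ^ n))
      atTop (𝓝 d) := by
  have hα : 0 < α := zero_lt_one.trans h1
  have hratio := tendsto_pow_div_pow_of_abs_lt h
  have hinvpow : Tendsto (fun n : ℕ => (α ^ n)⁻¹) atTop (𝓝 0) :=
    tendsto_inv_atTop_zero.comp (tendsto_pow_atTop_atTop_of_one_lt h1)
  have hlim := ((((hinvpow.const_mul e).add (hratio.const_mul a)).add
    (tendsto_const_nhds (x := c))).mul tendsto_inv_atTop_nhds_zero_nat).add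
    ((hratio.const_mul b).add (tendsto_const_nhds (x := d)))
  rw [mul_zero, zero_add, mul_zero, zero_add] at hlim
  refine hlim.congr' ?_
  filter_upwards [eventually_ge_atTop 1] with n hn
  have hn0 : (n : ℝ) ≠ 0 := by exact_mod_cast (Nat.one_le_iff_ne_zero.mp hn)
  have : α ^ n ≠ 0 := pow_ne_zero n hα.ne'
  field_simp
  ring

theorem stmt_7 (Φ IDF : ℕ → ℝ)
    (hΦ0 : Φ 0 = 1) (hΦ1 : Φ 1 = 6)
    (hΦ : ∀ n, 2 ≤ n → Φ n = 6 * Φ (n - 1) - 4 * Φ (n - 2))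
    (hIDF : ∀ n : ℕ, IDF n = -4
      + (50 + 22 * Real.sqrt 5) / 25 * (3 - Real.sqrt 5) ^ n
      + (13 - 3 * Real.sqrt 5) / 10 * n * (3 - Real.sqrt 5) ^ n
      + (50 - 22 * Real.sqrt 5) / 25 * (3 + Real.sqrt 5) ^ n
      + (13 + 3 * Real.sqrt 5) / 10 * n * (3 + Real.sqrt 5) ^ n) :
    Filter.Tendsto (fun n : ℕ => IDF n / (n * Φ n)) Filter.atTop
      (nhds ((-5 + 6 * Real.sqrt 5) / 5)) := by
  set s := Real.sqrt 5
  have hs : s ^ 2 = 5 := Real.sq_sqrt (by norm_num)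
  have hs2 : 2 < s := by nlinarith [Real.sqrt_nonneg 5]
  have hs3 : s < 3 := by nlinarith [Real.sqrt_nonneg 5]
  have hβα : |3 - s| < 3 + s := by rw [abs_lt]; constructor <;> linarith
  have hΦ_closed : ∀ n, Φ n = (5 + 3 * s) / 10 * (3 + s) ^ n + (5 - 3 * s) / 10 * (3 - s) ^ n :=
    eq_add_mul_pow_of_recurrence (p := 6) (q := 4)
      (by linear_combination hs) (by linear_combination hs)
      (by rw [hΦ0]; ring) (by rw [hΦ1]; linear_combination (-3 / 5 : ℝ) * hs)
      fun n => by simpa using hΦ (n + 2) (by omega)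
  have hIDF_lim : Tendsto (fun n : ℕ => IDF n / (n * (3 + s) ^ n)) atTop
      (𝓝 ((13 + 3 * s) / 10)) := by
    simpa only [hIDF] using tendsto_div_natCast_mul_pow hβα (by linarith) _ _ _ _ _
  have hΦ_lim : Tendsto (fun n : ℕ => Φ n / (3 + s) ^ n) atTop (𝓝 ((5 + 3 * s) / 10)) := by
    simpa only [hΦ_closed] using tendsto_add_mul_pow_div_pow hβα _ _
  have hA : (5 + 3 * s) / 10 ≠ 0 := by positivity
  have hlimit : (13 + 3 * s) / 10 / ((5 + 3 * s) / 10) = (-5 + 6 * s) / 5 := by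
    field_simp
    linear_combination -18 * hs
  rw [← hlimit]
  refine (hIDF_lim.div hΦ_lim hA).congr fun n => ?_
  have : (3 + s) ^ n ≠ 0 := pow_ne_zero n (by linarith)
  simp only [Pi.div_apply]
  field_simp
end

section
/- Let IDF : ℕ → ℝ satisfy the initial values IDF(4)=5948, IDF(5)=38908, IDF(6)=244348, IDF(7)=1492092, IDF(8)=8926204, and the recurrence IDF(n+2) = 13·IDF(n+1) − 56·IDF(n) + 92·IDF(n−1) − 64·IDF(n−2) + 16·IDF(n−3) for n ≥ 7. Then IDF(n) = −4 + ((50+22√5)/25)(3−√5)^n + ((13−3√5)/10)n(3−√5)^n + ((50−22√5)/25)(3+√5)^n + ((13+3√5)/10)n(3+√5)^n for all n ≥ 4. -/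
noncomputable def Faux (n : ℕ) : ℝ := -4
      + (50 + 22 * Real.sqrt 5) / 25 * (3 - Real.sqrt 5) ^ n
      + (13 - 3 * Real.sqrt 5) / 10 * n * (3 - Real.sqrt 5) ^ n
      + (50 - 22 * Real.sqrt 5) / 25 * (3 + Real.sqrt 5) ^ n
      + (13 + 3 * Real.sqrt 5) / 10 * n * (3 + Real.sqrt 5) ^ n

lemma hs2 : Real.sqrt 5 ^ 2 = 5 := Real.sq_sqrt (by norm_num)

lemma Faux4 : Faux 4 = 5948 := by simp only [Faux]; push_cast; linear_combination ((23928/25) + (552/25)*Real.sqrt 5^2) * hs2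
lemma Faux5 : Faux 5 = 38908 := by simp only [Faux]; push_cast; linear_combination ((34781/5) + (1864/5)*Real.sqrt 5^2 + (31/25)*Real.sqrt 5^4) * hs2
lemma Faux6 : Faux 6 = 244348 := by simp only [Faux]; push_cast; linear_combination ((1150318/25) + (19516/5)*Real.sqrt 5^2 + (1318/25)*Real.sqrt 5^4) * hs2
lemma Faux7 : Faux 7 = 1492092 := by simp only [Faux]; push_cast; linear_combination ((7217723/25) + (162971/5)*Real.sqrt 5^2 + (23489/25)*Real.sqrt 5^4 + (61/25)*Real.sqrt 5^6) * hs2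
lemma Faux8 : Faux 8 = 8926204 := by simp only [Faux]; push_cast; linear_combination ((43817476/25) + (5966468/25)*Real.sqrt 5^2 + (283372/25)*Real.sqrt 5^4 + (2444/25)*Real.sqrt 5^6) * hs2

lemma key (s X Y n : ℝ) (hs : s^2 = 5) :
    -4 + (50+22*s)/25 * (X*(3-s)^5) + (13-3*s)/10*(n+5)*(X*(3-s)^5)
      + (50-22*s)/25*(Y*(3+s)^5) + (13+3*s)/10*(n+5)*(Y*(3+s)^5)
    = 13*(-4 + (50+22*s)/25 * (X*(3-s)^4) + (13-3*s)/10*(n+4)*(X*(3-s)^4)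
      + (50-22*s)/25*(Y*(3+s)^4) + (13+3*s)/10*(n+4)*(Y*(3+s)^4))
    - 56*(-4 + (50+22*s)/25 * (X*(3-s)^3) + (13-3*s)/10*(n+3)*(X*(3-s)^3)
      + (50-22*s)/25*(Y*(3+s)^3) + (13+3*s)/10*(n+3)*(Y*(3+s)^3))
    + 92*(-4 + (50+22*s)/25 * (X*(3-s)^2) + (13-3*s)/10*(n+2)*(X*(3-s)^2)
      + (50-22*s)/25*(Y*(3+s)^2) + (13+3*s)/10*(n+2)*(Y*(3+s)^2))
    - 64*(-4 + (50+22*s)/25 * (X*(3-s)^1) + (13-3*s)/10*(n+1)*(X*(3-s)^1)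
      + (50-22*s)/25*(Y*(3+s)^1) + (13+3*s)/10*(n+1)*(Y*(3+s)^1))
    + 16*(-4 + (50+22*s)/25 * (X*(3-s)^0) + (13-3*s)/10*(n+0)*(X*(3-s)^0)
      + (50-22*s)/25*(Y*(3+s)^0) + (13+3*s)/10*(n+0)*(Y*(3+s)^0)) := by
  linear_combination ((-79/2)*Y + (-13)*Y*n + (-79/2)*X + (-13)*X*n + 19*s*Y + (-19/2)*s*Y*n
    + (-19)*s*X + (19/2)*s*X*n + 44*s^2*Y + (11/10)*s^2*Y*n + 44*s^2*X + (11/10)*s^2*X*n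
    + (341/25)*s^3*Y + (19/10)*s^3*Y*n + (-341/25)*s^3*X + (-19/10)*s^3*X*n
    + (31/50)*s^4*Y + (3/10)*s^4*Y*n + (31/50)*s^4*X + (3/10)*s^4*X*n) * hs

lemma Fauxrec (m : ℕ) : Faux (m+5) = 13 * Faux (m+4) - 56 * Faux (m+3)
    + 92 * Faux (m+2) - 64 * Faux (m+1) + 16 * Faux m := by
  simp only [Faux, pow_add]
  push_cast
  linear_combination key (Real.sqrt 5) ((3-Real.sqrt 5)^m) ((3+Real.sqrt 5)^m) m hs2

theorem stmt_8 (IDF : ℕ → ℝ)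
    (h4 : IDF 4 = 5948) (h5 : IDF 5 = 38908) (h6 : IDF 6 = 244348)
    (h7 : IDF 7 = 1492092) (h8 : IDF 8 = 8926204)
    (hrec : ∀ n, 7 ≤ n → IDF (n + 2) = 13 * IDF (n + 1) - 56 * IDF n
      + 92 * IDF (n - 1) - 64 * IDF (n - 2) + 16 * IDF (n - 3)) :
    ∀ n, 4 ≤ n → IDF n = -4
      + (50 + 22 * Real.sqrt 5) / 25 * (3 - Real.sqrt 5) ^ n
      + (13 - 3 * Real.sqrt 5) / 10 * n * (3 - Real.sqrt 5) ^ n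
      + (50 - 22 * Real.sqrt 5) / 25 * (3 + Real.sqrt 5) ^ n
      + (13 + 3 * Real.sqrt 5) / 10 * n * (3 + Real.sqrt 5) ^ n := by
  have main : ∀ n, 4 ≤ n → IDF n = Faux n := by
    intro n
    induction n using Nat.strong_induction_on with
    | _ n ih =>
      intro hn
      match n, hn with
      | 4, _ => rw [h4, Faux4]
      | 5, _ => rw [h5, Faux5]
      | 6, _ => rw [h6, Faux6]
      | 7, _ => rw [h7, Faux7]
      | 8, _ => rw [h8, Faux8]
      | (k+9), _ =>
        have e := hrec (k+7) (by omega)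
        have e1 : k+7+2 = k+9 := by omega
        have e2 : k+7+1 = k+8 := by omega
        have e3 : k+7-1 = k+6 := by omega
        have e4 : k+7-2 = k+5 := by omega
        have e5 : k+7-3 = k+4 := by omega
        rw [e1, e2, e3, e4, e5] at e
        rw [e, ih (k+8) (by omega) (by omega), ih (k+7) (by omega) (by omega),
          ih (k+6) (by omega) (by omega), ih (k+5) (by omega) (by omega),
          ih (k+4) (by omega) (by omega)]
        have := Fauxrec (k+4)
        norm_num at this ⊢
        linarith [this]
  intro n hn
  have := main n hn
  simpa [Faux] using this
end

section
/- Let Af : ℕ → ℝ[X] satisfy Af(n) = (3x³+3x²+x)Af(n−1) − (2x⁶+6x⁵−x⁴+3x³)Af(n−2) + (x⁷+3x⁶)Af(n−3) with Af(0)=1, Af(1)=2x³+3x²+x, Af(2)=4x⁶+9x⁵+15x⁴+3x³+x². Then for every n ≥ 1, the degree of Af(n) is 3n, its leading coefficient is 2^n, and the smallest exponent with nonzero coefficient is n. -/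
/-!
Track, along the recurrence, both ends of each polynomial: `Af n` lives in degrees `n, …, 3n`
with coefficient `1` at `X ^ n` and `2 ^ n` at `X ^ (3n)`. In degree `3(n+3)` only the first two
terms of the recurrence contribute, `3 · 2 ^ (n+2) - 2 · 2 ^ (n+1) = 2 ^ (n+3)`; in degree `n+3`
only `X · Af (n+2)` does, since the other two multipliers are divisible by `X ^ 3`.
-/

open Polynomial

namespace Polynomial

variable {R : Type*}

section Semiring

variable [Semiring R] {p q : R[X]} {a b : ℕ}

theorem X_pow_mul_mul_X_pow_mul (a b : ℕ) (p q : R[X]) :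
    X ^ a * p * (X ^ b * q) = X ^ (a + b) * (p * q) := by
  rw [pow_add, mul_assoc, ← mul_assoc p, ← (commute_X_pow p b).eq]
  simp only [mul_assoc]

theorem X_pow_add_dvd_mul (hp : X ^ a ∣ p) (hq : X ^ b ∣ q) : X ^ (a + b) ∣ p * q := by
  obtain ⟨p', rfl⟩ := hp
  obtain ⟨q', rfl⟩ := hq
  exact ⟨p' * q', X_pow_mul_mul_X_pow_mul a b p' q'⟩

theorem coeff_mul_add_eq_of_X_pow_dvd (hp : X ^ a ∣ p) (hq : X ^ b ∣ q) :
    (p * q).coeff (a + b) = p.coeff a * q.coeff b := by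
  obtain ⟨p', rfl⟩ := hp
  obtain ⟨q', rfl⟩ := hq
  simp [X_pow_mul_mul_X_pow_mul, coeff_X_pow_mul']

end Semiring

structure HasEdgeCoeffs [Semiring R] (p : R[X]) (lo hi : ℕ) (cl ch : R) : Prop where
  X_pow_dvd : X ^ lo ∣ p
  natDegree_le : p.natDegree ≤ hi
  coeff_lo : p.coeff lo = cl
  coeff_hi : p.coeff hi = ch

namespace HasEdgeCoeffs

section Semiring

variable [Semiring R] {p q : R[X]} {lo hi a b a' b' : ℕ} {cl ch c c' d d' : R}

theorem mul (hp : HasEdgeCoeffs p a b c d) (hq : HasEdgeCoeffs q a' b' c' d')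
    (hlo : a + a' = lo) (hhi : b + b' = hi) : HasEdgeCoeffs (p * q) lo hi (c * c') (d * d') := by
  subst hlo hhi
  exact ⟨X_pow_add_dvd_mul hp.X_pow_dvd hq.X_pow_dvd,
    natDegree_mul_le_of_le hp.natDegree_le hq.natDegree_le,
    by rw [coeff_mul_add_eq_of_X_pow_dvd hp.X_pow_dvd hq.X_pow_dvd, hp.coeff_lo, hq.coeff_lo],
    by rw [coeff_mul_add_eq_of_natDegree_le hp.natDegree_le hq.natDegree_le, hp.coeff_hi,
      hq.coeff_hi]⟩

theorem add (hp : HasEdgeCoeffs p lo hi c d) (hq : HasEdgeCoeffs q lo hi c' d') :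
    HasEdgeCoeffs (p + q) lo hi (c + c') (d + d') :=
  ⟨dvd_add hp.X_pow_dvd hq.X_pow_dvd, natDegree_add_le_of_degree_le hp.natDegree_le hq.natDegree_le,
    by rw [coeff_add, hp.coeff_lo, hq.coeff_lo], by rw [coeff_add, hp.coeff_hi, hq.coeff_hi]⟩

theorem coeff_eq_zero_of_lt (h : HasEdgeCoeffs p lo hi cl ch) {m : ℕ} (hm : m < lo) :
    p.coeff m = 0 :=
  X_pow_dvd_iff.mp h.X_pow_dvd m hm

theorem natDegree_eq (h : HasEdgeCoeffs p lo hi cl ch) (hch : ch ≠ 0) : p.natDegree = hi :=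
  natDegree_eq_of_le_of_coeff_ne_zero h.natDegree_le (h.coeff_hi ▸ hch)

theorem leadingCoeff_eq (h : HasEdgeCoeffs p lo hi cl ch) (hch : ch ≠ 0) :
    p.leadingCoeff = ch := by
  rw [leadingCoeff, h.natDegree_eq hch, h.coeff_hi]

end Semiring

theorem sub [Ring R] {p q : R[X]} {lo hi : ℕ} {c c' d d' : R}
    (hp : HasEdgeCoeffs p lo hi c d) (hq : HasEdgeCoeffs q lo hi c' d') :
    HasEdgeCoeffs (p - q) lo hi (c - c') (d - d') :=
  ⟨dvd_sub hp.X_pow_dvd hq.X_pow_dvd,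
    (natDegree_sub_le_of_le hp.natDegree_le hq.natDegree_le).trans (max_self hi).le,
    by rw [coeff_sub, hp.coeff_lo, hq.coeff_lo], by rw [coeff_sub, hp.coeff_hi, hq.coeff_hi]⟩

end HasEdgeCoeffs

end Polynomial

theorem hasEdgeCoeffs_recurrence_step {p q r : ℝ[X]} {k : ℕ}
    (hp : HasEdgeCoeffs p k (3 * k) 1 (2 ^ k))
    (hq : HasEdgeCoeffs q (k + 1) (3 * (k + 1)) 1 (2 ^ (k + 1)))
    (hr : HasEdgeCoeffs r (k + 2) (3 * (k + 2)) 1 (2 ^ (k + 2))) :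
    HasEdgeCoeffs ((3 * X ^ 3 + 3 * X ^ 2 + X) * r - (2 * X ^ 6 + 6 * X ^ 5 - X ^ 4 + 3 * X ^ 3) * q
      + (X ^ 7 + 3 * X ^ 6) * p) (k + 3) (3 * (k + 3)) 1 (2 ^ (k + 3)) := by
  -- Each multiplier gets the window that puts its product in degrees `k + 3, …, 3 * (k + 3)`.
  have hA : HasEdgeCoeffs (3 * X ^ 3 + 3 * X ^ 2 + X : ℝ[X]) 1 3 1 3 :=
    ⟨⟨3 * X ^ 2 + 3 * X + 1, by ring⟩, by compute_degree!, by simp [coeff_X, coeff_X_pow],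
      by simp [coeff_X, coeff_X_pow]⟩
  have hB : HasEdgeCoeffs (2 * X ^ 6 + 6 * X ^ 5 - X ^ 4 + 3 * X ^ 3 : ℝ[X]) 2 6 0 2 :=
    ⟨⟨2 * X ^ 4 + 6 * X ^ 3 - X ^ 2 + 3 * X, by ring⟩, by compute_degree!,
      by simp [coeff_X_pow], by simp [coeff_X_pow]⟩
  have hC : HasEdgeCoeffs (X ^ 7 + 3 * X ^ 6 : ℝ[X]) 3 9 0 0 :=
    ⟨⟨X ^ 4 + 3 * X ^ 3, by ring⟩, by compute_degree!, by simp [coeff_X_pow],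
      by simp [coeff_X_pow]⟩
  have h : HasEdgeCoeffs _ (k + 3) (3 * (k + 3)) _ _ :=
    ((hA.mul hr (by ring) (by ring)).sub (hB.mul hq (by ring) (by ring))).add
      (hC.mul hp (by ring) (by ring))
  exact ⟨h.X_pow_dvd, h.natDegree_le, h.coeff_lo.trans (by ring), h.coeff_hi.trans (by ring)⟩

theorem hasEdgeCoeffs_of_recurrence (Af : ℕ → ℝ[X]) (h0 : Af 0 = 1)
    (h1 : Af 1 = 2 * X ^ 3 + 3 * X ^ 2 + X)
    (h2 : Af 2 = 4 * X ^ 6 + 9 * X ^ 5 + 15 * X ^ 4 + 3 * X ^ 3 + X ^ 2)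
    (hrec : ∀ n, 3 ≤ n → Af n = (3 * X ^ 3 + 3 * X ^ 2 + X) * Af (n - 1)
      - (2 * X ^ 6 + 6 * X ^ 5 - X ^ 4 + 3 * X ^ 3) * Af (n - 2)
      + (X ^ 7 + 3 * X ^ 6) * Af (n - 3)) :
    ∀ n, HasEdgeCoeffs (Af n) n (3 * n) 1 (2 ^ n)
  | 0 => h0 ▸ ⟨one_dvd _, natDegree_one.le, coeff_one_zero, by simp⟩
  | 1 => h1 ▸ ⟨⟨2 * X ^ 2 + 3 * X + 1, by ring⟩, by compute_degree!,
      by simp [coeff_X, coeff_X_pow], by simp [coeff_X, coeff_X_pow]⟩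
  | 2 => h2 ▸ ⟨⟨4 * X ^ 4 + 9 * X ^ 3 + 15 * X ^ 2 + 3 * X + 1, by ring⟩, by compute_degree!,
      by simp [coeff_X_pow], by norm_num [coeff_X_pow]⟩
  | k + 3 => by
    rw [hrec (k + 3) le_add_self]
    exact hasEdgeCoeffs_recurrence_step (hasEdgeCoeffs_of_recurrence Af h0 h1 h2 hrec k)
      (hasEdgeCoeffs_of_recurrence Af h0 h1 h2 hrec (k + 1))
      (hasEdgeCoeffs_of_recurrence Af h0 h1 h2 hrec (k + 2))

theorem stmt_12 (Af : ℕ → Polynomial ℝ)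
    (h0 : Af 0 = 1)
    (h1 : Af 1 = 2 * X ^ 3 + 3 * X ^ 2 + X)
    (h2 : Af 2 = 4 * X ^ 6 + 9 * X ^ 5 + 15 * X ^ 4 + 3 * X ^ 3 + X ^ 2)
    (hrec : ∀ n, 3 ≤ n → Af n = (3 * X ^ 3 + 3 * X ^ 2 + X) * Af (n - 1)
      - (2 * X ^ 6 + 6 * X ^ 5 - X ^ 4 + 3 * X ^ 3) * Af (n - 2)
      + (X ^ 7 + 3 * X ^ 6) * Af (n - 3)) :
    ∀ n, 1 ≤ n →
      (Af n).natDegree = 3 * n ∧ (Af n).leadingCoeff = 2 ^ n ∧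
      (Af n).coeff n ≠ 0 ∧ ∀ m < n, (Af n).coeff m = 0 := by
  intro n _
  have h := hasEdgeCoeffs_of_recurrence Af h0 h1 h2 hrec n
  have h2n : (2 : ℝ) ^ n ≠ 0 := by positivity
  exact ⟨h.natDegree_eq h2n, h.leadingCoeff_eq h2n, h.coeff_lo ▸ one_ne_zero,
    fun _ => h.coeff_eq_zero_of_lt⟩
end

section
/- Let Af : ℕ → ℝ[X] satisfy Af(n) = (3x³+3x²+x)Af(n−1) − (2x⁶+6x⁵−x⁴+3x³)Af(n−2) + (x⁷+3x⁶)Af(n−3) with Af(0)=1, Af(1)=2x³+3x²+x, Af(2)=4x⁶+9x⁵+15x⁴+3x³+x². Then for every n ≥ 1 and every integer m with n ≤ m ≤ 3n, the coefficient of x^m in Af(n) is strictly positive. -/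
open Polynomial

private lemma nn_mul {p q : Polynomial ℝ} (hp : ∀ m, 0 ≤ p.coeff m)
    (hq : ∀ m, 0 ≤ q.coeff m) : ∀ m, 0 ≤ (p * q).coeff m := by
  intro m
  rw [Polynomial.coeff_mul]
  exact Finset.sum_nonneg fun x _ => mul_nonneg (hp _) (hq _)

private lemma nn_add {p q : Polynomial ℝ} (hp : ∀ m, 0 ≤ p.coeff m)
    (hq : ∀ m, 0 ≤ q.coeff m) : ∀ m, 0 ≤ (p + q).coeff m := by
  intro m
  rw [Polynomial.coeff_add]
  exact add_nonneg (hp m) (hq m)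

theorem stmt_13 (Af : ℕ → Polynomial ℝ)
    (h0 : Af 0 = 1)
    (h1 : Af 1 = 2 * X ^ 3 + 3 * X ^ 2 + X)
    (h2 : Af 2 = 4 * X ^ 6 + 9 * X ^ 5 + 15 * X ^ 4 + 3 * X ^ 3 + X ^ 2)
    (hrec : ∀ n, 3 ≤ n → Af n = (3 * X ^ 3 + 3 * X ^ 2 + X) * Af (n - 1)
      - (2 * X ^ 6 + 6 * X ^ 5 - X ^ 4 + 3 * X ^ 3) * Af (n - 2)
      + (X ^ 7 + 3 * X ^ 6) * Af (n - 3)) :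
    ∀ n, 1 ≤ n → ∀ m : ℕ, n ≤ m → m ≤ 3 * n → 0 < (Af n).coeff m := by
  -- nonnegativity of small concrete polynomials
  have nn1 : ∀ m, (0:ℝ) ≤ (2 * X ^ 3 + 3 * X ^ 2 + X : Polynomial ℝ).coeff m := by
    intro m
    simp only [coeff_add, coeff_ofNat_mul, coeff_X_pow, coeff_X]
    split_ifs <;> norm_num
  have nn2 : ∀ m, (0:ℝ) ≤ (4 * X ^ 6 + 9 * X ^ 5 + 15 * X ^ 4 + 3 * X ^ 3 + X ^ 2 :
      Polynomial ℝ).coeff m := by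
    intro m
    simp only [coeff_add, coeff_ofNat_mul, coeff_X_pow, coeff_X]
    split_ifs <;> norm_num
  have nnR2 : ∀ m, (0:ℝ) ≤ (3 * X ^ 5 + 11 * X ^ 4 : Polynomial ℝ).coeff m := by
    intro m
    simp only [coeff_add, coeff_ofNat_mul, coeff_X_pow]
    split_ifs <;> norm_num
  have nnA : ∀ m, (0:ℝ) ≤ (X + 2 * X ^ 3 : Polynomial ℝ).coeff m := by
    intro m
    simp only [coeff_add, coeff_ofNat_mul, coeff_X_pow, coeff_X]
    split_ifs <;> norm_num
  have nnB : ∀ m, (0:ℝ) ≤ (X ^ 3 + 3 * X ^ 2 : Polynomial ℝ).coeff m := by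
    intro m
    simp only [coeff_add, coeff_ofNat_mul, coeff_X_pow]
    split_ifs <;> norm_num
  have nnC' : ∀ m, (0:ℝ) ≤ (2 * X ^ 4 : Polynomial ℝ).coeff m := by
    intro m
    simp only [coeff_ofNat_mul, coeff_X_pow]
    split_ifs <;> norm_num
  have nnD : ∀ m, (0:ℝ) ≤ (X ^ 7 + 3 * X ^ 6 : Polynomial ℝ).coeff m := by
    intro m
    simp only [coeff_add, coeff_ofNat_mul, coeff_X_pow]
    split_ifs <;> norm_num
  -- key: Af n is coefficientwise nonneg, and for n ≥ 2 so is Af n - (X + 2X^3) * Af (n-1)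
  have key : ∀ n, (∀ m, 0 ≤ (Af n).coeff m) ∧
      (2 ≤ n → ∀ m, 0 ≤ (Af n - (X + 2 * X ^ 3) * Af (n - 1)).coeff m) := by
    intro n
    induction n using Nat.strong_induction_on with
    | _ n ih =>
      match n with
      | 0 =>
        refine ⟨?_, by omega⟩
        intro m; rw [h0, Polynomial.coeff_one]; split_ifs <;> norm_num
      | 1 =>
        refine ⟨?_, by omega⟩
        intro m; rw [h1]; exact nn1 m
      | 2 =>
        refine ⟨fun m => by rw [h2]; exact nn2 m, fun _ => ?_⟩
        have e : Af 2 - (X + 2 * X ^ 3) * Af (2 - 1) = 3 * X ^ 5 + 11 * X ^ 4 := by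
          show Af 2 - (X + 2 * X ^ 3) * Af 1 = _
          rw [h1, h2]; ring
        rw [e]; exact nnR2
      | (k + 3) =>
        have h1' : Af (k + 3 - 1) = Af (k + 2) := rfl
        have h2' : Af (k + 3 - 2) = Af (k + 1) := rfl
        have h3' : Af (k + 3 - 3) = Af k := rfl
        have hr := hrec (k + 3) (by omega)
        rw [h1', h2', h3'] at hr
        have ihk := (ih k (by omega)).1
        have ihk1 := (ih (k + 1) (by omega)).1
        have ihk2 := (ih (k + 2) (by omega)).1
        have ihR : ∀ m, 0 ≤ (Af (k + 2) - (X + 2 * X ^ 3) * Af (k + 1)).coeff m := by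
          have := (ih (k + 2) (by omega)).2 (by omega)
          have e : Af (k + 2 - 1) = Af (k + 1) := rfl
          rwa [e] at this
        -- the crucial identity:
        have eR : Af (k + 3) - (X + 2 * X ^ 3) * Af (k + 2) =
            (X ^ 3 + 3 * X ^ 2) * (Af (k + 2) - (X + 2 * X ^ 3) * Af (k + 1)) +
              (2 * X ^ 4 * Af (k + 1) + (X ^ 7 + 3 * X ^ 6) * Af k) := by
          rw [hr]; ring
        have nnR : ∀ m, 0 ≤ (Af (k + 3) - (X + 2 * X ^ 3) * Af (k + 2)).coeff m := by
          rw [eR]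
          exact nn_add (nn_mul nnB ihR)
            (nn_add (nn_mul nnC' ihk1) (nn_mul nnD ihk))
        constructor
        · have e : Af (k + 3) =
              (Af (k + 3) - (X + 2 * X ^ 3) * Af (k + 2)) + (X + 2 * X ^ 3) * Af (k + 2) := by
            ring
          rw [e]
          exact nn_add nnR (nn_mul nnA ihk2)
        · intro _
          have e : Af (k + 3 - 1) = Af (k + 2) := rfl
          rw [e]; exact nnR
  -- main induction
  intro n hn
  induction n with
  | zero => omega
  | succ n ihn =>
    match n, ihn with
    | 0, _ =>
      intro m hm1 hm2
      rw [h1]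
      interval_cases m <;>
        · simp only [coeff_add, coeff_ofNat_mul, coeff_X_pow, coeff_X]
          norm_num
    | (k + 1), ihn =>
      intro m hm1 hm2
      have ihp := ihn (by omega)
      set p := Af (k + 1) with hp
      have hnnp := (key (k + 1)).1
      have hR : 0 ≤ (Af (k + 2) - (X + 2 * X ^ 3) * p).coeff m := by
        have := (key (k + 2)).2 (by omega) m
        have e : Af (k + 2 - 1) = Af (k + 1) := rfl
        rwa [e] at this
      have hsplit : (Af (k + 2)).coeff m =
          (Af (k + 2) - (X + 2 * X ^ 3) * p).coeff m +
            ((X * p).coeff m + (2 * (X ^ 3 * p)).coeff m) := by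
        rw [← Polynomial.coeff_add, ← Polynomial.coeff_add]
        congr 1
        ring
      rw [hsplit]
      by_cases hcase : m ≤ 3 * (k + 1) + 1
      · -- use the X * p term: coeff (m-1) of p is positive
        obtain ⟨d, rfl⟩ : ∃ d, m = d + 1 := ⟨m - 1, by omega⟩
        have hXp : (X * p).coeff (d + 1) = p.coeff d := Polynomial.coeff_X_mul p d
        have hpos : 0 < p.coeff d := ihp d (by omega) (by omega)
        have h2nn : 0 ≤ (2 * (X ^ 3 * p)).coeff (d + 1) :=
          nn_mul (by
            intro m
            simp only [Polynomial.coeff_ofNat_mul, coeff_X_pow]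
            split_ifs <;> norm_num : ∀ m, (0:ℝ) ≤ (2 * X ^ 3 : Polynomial ℝ).coeff m)
            hnnp (d + 1) |>.trans_eq (by rw [mul_assoc])
        rw [hXp]
        linarith
      · -- m ∈ {3k+5, 3k+6}; use the 2 X^3 * p term
        obtain ⟨d, rfl⟩ : ∃ d, m = d + 3 := ⟨m - 3, by omega⟩
        have hX3p : (X ^ 3 * p).coeff (d + 3) = p.coeff d := Polynomial.coeff_X_pow_mul p 3 d
        have h2 : (2 * (X ^ 3 * p)).coeff (d + 3) = 2 * p.coeff d := by
          rw [Polynomial.coeff_ofNat_mul, hX3p]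
        have hpos : 0 < p.coeff d := ihp d (by omega) (by omega)
        have hXnn : 0 ≤ (X * p).coeff (d + 3) := nn_mul (by
            intro m
            simp only [coeff_X]
            split_ifs <;> norm_num : ∀ m, (0:ℝ) ≤ (X : Polynomial ℝ).coeff m) hnnp (d + 3)
        rw [h2]
        linarith
end

section
/- Define A : ℕ → ℝ by A(n) = (d/dx Af(n))(1), where Af : ℕ → ℝ[X] satisfies Af(n) = (3x³+3x²+x)Af(n−1) − (2x⁶+6x⁵−x⁴+3x³)Af(n−2) + (x⁷+3x⁶)Af(n−3) with Af(0)=1, Af(1)=2x³+3x²+x, Af(2)=4x⁶+9x⁵+15x⁴+3x³+x². Then A(n) = −3 + ((150+67√5)/100)(3−√5)^n + ((29−10√5)/20)n(3−√5)^n + ((150−67√5)/100)(3+√5)^n + ((29+10√5)/20)n(3+√5)^n for all n ≥ 0. -/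
open Polynomial

theorem stmt_14 (Af : ℕ → Polynomial ℝ)
    (h0 : Af 0 = 1)
    (h1 : Af 1 = 2 * X ^ 3 + 3 * X ^ 2 + X)
    (h2 : Af 2 = 4 * X ^ 6 + 9 * X ^ 5 + 15 * X ^ 4 + 3 * X ^ 3 + X ^ 2)
    (hrec : ∀ n, 3 ≤ n → Af n = (3 * X ^ 3 + 3 * X ^ 2 + X) * Af (n - 1)
      - (2 * X ^ 6 + 6 * X ^ 5 - X ^ 4 + 3 * X ^ 3) * Af (n - 2)
      + (X ^ 7 + 3 * X ^ 6) * Af (n - 3))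
    (A : ℕ → ℝ)
    (hA : ∀ n, A n = (Polynomial.derivative (Af n)).eval 1) :
    ∀ n : ℕ, A n = -3
      + (150 + 67 * Real.sqrt 5) / 100 * (3 - Real.sqrt 5) ^ n
      + (29 - 10 * Real.sqrt 5) / 20 * n * (3 - Real.sqrt 5) ^ n
      + (150 - 67 * Real.sqrt 5) / 100 * (3 + Real.sqrt 5) ^ n
      + (29 + 10 * Real.sqrt 5) / 20 * n * (3 + Real.sqrt 5) ^ n := by
  set s := Real.sqrt 5 with hsdef
  have h5 : s ^ 2 = 5 := Real.sq_sqrt (by norm_num)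
  -- closed forms
  set fB : ℕ → ℝ := fun n => (5 - 3 * s) / 10 * (3 - s) ^ n + (5 + 3 * s) / 10 * (3 + s) ^ n
    with hfB
  set fA : ℕ → ℝ := fun n => -3
      + (150 + 67 * s) / 100 * (3 - s) ^ n
      + (29 - 10 * s) / 20 * n * (3 - s) ^ n
      + (150 - 67 * s) / 100 * (3 + s) ^ n
      + (29 + 10 * s) / 20 * n * (3 + s) ^ n with hfA
  have key : ∀ n : ℕ, (Af n).eval 1 = fB n ∧ (derivative (Af n)).eval 1 = fA n := by
    intro n
    induction n using Nat.strong_induction_on with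
    | _ n ih =>
      match n with
      | 0 =>
        constructor
        · simp [h0, hfB]; linear_combination
        · simp [h0, hfA]; linear_combination
      | 1 =>
        constructor
        · simp [h1, hfB]; linear_combination (-3/5) * h5
        · simp [h1, hfA, derivative_add, derivative_mul]
          linear_combination (17/50) * h5
      | 2 =>
        constructor
        · simp [h2, hfB]; linear_combination (-23/5) * h5
        · simp [h2, hfA, derivative_add, derivative_mul]
          linear_combination (-319/25) * h5
      | (m+3) =>
        obtain ⟨ihB2, ihA2⟩ := ih (m+2) (by omega)
        obtain ⟨ihB1, ihA1⟩ := ih (m+1) (by omega)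
        obtain ⟨ihB0, ihA0⟩ := ih m (by omega)
        have E := hrec (m+3) (by omega)
        have e1 : m + 3 - 1 = m + 2 := rfl
        have e2 : m + 3 - 2 = m + 1 := rfl
        have e3 : m + 3 - 3 = m := rfl
        rw [e1, e2, e3] at E
        have hBstep : (Af (m+3)).eval 1
            = 7 * (Af (m+2)).eval 1 - 10 * (Af (m+1)).eval 1 + 4 * (Af m).eval 1 := by
          rw [E]; simp; ring
        have hAstep : (derivative (Af (m+3))).eval 1
            = 16 * (Af (m+2)).eval 1 + 7 * (derivative (Af (m+2))).eval 1
              - 47 * (Af (m+1)).eval 1 - 10 * (derivative (Af (m+1))).eval 1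
              + 25 * (Af m).eval 1 + 4 * (derivative (Af m)).eval 1 := by
          rw [E]; simp [derivative_mul, derivative_sub, derivative_add]; ring
        constructor
        · rw [hBstep, ihB2, ihB1, ihB0, hfB]
          simp only
          linear_combination (-((3/10 * s^2 - 11/10 * s + 1) * (3 - s) ^ m
            + (3/10 * s^2 + 11/10 * s + 1) * (3 + s) ^ m)) * h5
        · rw [hAstep, ihB2, ihB1, ihB0, ihA2, ihA1, ihA0, hfA, hfB]
          simp only
          push_cast
          linear_combination (-((3 - s) ^ m * ((m : ℝ) * (s^2/2 - 49/20 * s + 29/10)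
              + (83/100 * s^2 - 621/100 * s + 203/20))
            + (3 + s) ^ m * ((m : ℝ) * (s^2/2 + 49/20 * s + 29/10)
              + (83/100 * s^2 + 621/100 * s + 203/20)))) * h5
  intro n
  rw [hA n, (key n).2, hfA]
end

section
/- Let Φ(n) = ((5−3√5)/10)(3−√5)^n + ((5+3√5)/10)(3+√5)^n and A(n) = −3 + ((150+67√5)/100)(3−√5)^n + ((29−10√5)/20)n(3−√5)^n + ((150−67√5)/100)(3+√5)^n + ((29+10√5)/20)n(3+√5)^n. Then lim_{n→∞} A(n)/(n·Φ(n)) = (5 + 37√5)/40. -/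
open Filter Real

private lemma aux_div (x y c m : ℝ) (hc : c ≠ 0) :
    x / (m * y) = x / (m * c) / (y / c) := by
  rw [div_div_div_comm, mul_div_assoc, div_self hc, mul_one, div_div, mul_comm y m]

theorem stmt_15 (Φ A : ℕ → ℝ)
    (hΦ : ∀ n : ℕ, Φ n =
      (5 - 3 * Real.sqrt 5) / 10 * (3 - Real.sqrt 5) ^ n +
      (5 + 3 * Real.sqrt 5) / 10 * (3 + Real.sqrt 5) ^ n)
    (hA : ∀ n : ℕ, A n = -3
      + (150 + 67 * Real.sqrt 5) / 100 * (3 - Real.sqrt 5) ^ n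
      + (29 - 10 * Real.sqrt 5) / 20 * n * (3 - Real.sqrt 5) ^ n
      + (150 - 67 * Real.sqrt 5) / 100 * (3 + Real.sqrt 5) ^ n
      + (29 + 10 * Real.sqrt 5) / 20 * n * (3 + Real.sqrt 5) ^ n) :
    Filter.Tendsto (fun n : ℕ => A n / (n * Φ n)) Filter.atTop
      (nhds ((5 + 37 * Real.sqrt 5) / 40)) := by
  set s := Real.sqrt 5 with hs
  have hs2 : s ^ 2 = 5 := Real.sq_sqrt (by norm_num)
  have hslb : (2 : ℝ) < s := by nlinarith [Real.sqrt_nonneg 5]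
  have hsub : s < 3 := by nlinarith [Real.sqrt_nonneg 5]
  set a : ℝ := 3 - s with ha
  set b : ℝ := 3 + s with hb
  have hapos : 0 < a := by simp [ha]; linarith
  have hbpos : 0 < b := by simp [hb]; linarith
  have hb1 : 1 < b := by simp [hb]; linarith
  have hab : a < b := by simp [ha, hb]; linarith
  set r : ℝ := a / b with hr
  have hr0 : 0 ≤ r := div_nonneg hapos.le hbpos.le
  have hr1 : r < 1 := (div_lt_one hbpos).2 hab
  have hbi0 : (0:ℝ) ≤ b⁻¹ := by positivity
  have hbi1 : b⁻¹ < 1 := by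
    rw [inv_lt_one_iff₀]; right; exact hb1
  -- limits of the basic pieces
  have hrn : Tendsto (fun n : ℕ => r ^ n) atTop (nhds 0) :=
    tendsto_pow_atTop_nhds_zero_of_lt_one hr0 hr1
  have hbin : Tendsto (fun n : ℕ => (b⁻¹) ^ n) atTop (nhds 0) :=
    tendsto_pow_atTop_nhds_zero_of_lt_one hbi0 hbi1
  have hninv : Tendsto (fun n : ℕ => ((n : ℝ))⁻¹) atTop (nhds 0) :=
    tendsto_inv_atTop_nhds_zero_nat
  set c1 : ℝ := (5 - 3 * s) / 10 with hc1
  set c2 : ℝ := (5 + 3 * s) / 10 with hc2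
  set c3 : ℝ := (150 + 67 * s) / 100 with hc3
  set c4 : ℝ := (150 - 67 * s) / 100 with hc4
  set c5 : ℝ := (29 - 10 * s) / 20 with hc5
  set c6 : ℝ := (29 + 10 * s) / 20 with hc6
  have hc2pos : 0 < c2 := by rw [hc2]; positivity
  -- the auxiliary function with the same eventual values
  have hnum : Tendsto (fun n : ℕ =>
      (-3) * ((n:ℝ)⁻¹ * (b⁻¹) ^ n) + c3 * (r ^ n * (n:ℝ)⁻¹) + c5 * r ^ n
        + c4 * (n:ℝ)⁻¹ + c6) atTop (nhds c6) := by
    have : Tendsto (fun n : ℕ =>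
        (-3) * ((n:ℝ)⁻¹ * (b⁻¹) ^ n) + c3 * (r ^ n * (n:ℝ)⁻¹) + c5 * r ^ n
          + c4 * (n:ℝ)⁻¹ + c6) atTop
        (nhds ((-3) * (0 * 0) + c3 * (0 * 0) + c5 * 0 + c4 * 0 + c6)) := by
      exact ((((((hninv.mul hbin).const_mul _).add
        (((hrn.mul hninv)).const_mul _)).add (hrn.const_mul _)).add
        (hninv.const_mul _)).add tendsto_const_nhds)
    simpa using this
  have hden : Tendsto (fun n : ℕ => c1 * r ^ n + c2) atTop (nhds c2) := by
    have : Tendsto (fun n : ℕ => c1 * r ^ n + c2) atTop (nhds (c1 * 0 + c2)) :=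
      (hrn.const_mul _).add tendsto_const_nhds
    simpa using this
  have hlim : Tendsto (fun n : ℕ =>
      ((-3) * ((n:ℝ)⁻¹ * (b⁻¹) ^ n) + c3 * (r ^ n * (n:ℝ)⁻¹) + c5 * r ^ n
        + c4 * (n:ℝ)⁻¹ + c6) / (c1 * r ^ n + c2)) atTop (nhds (c6 / c2)) :=
    hnum.div hden hc2pos.ne'
  have hval : c6 / c2 = (5 + 37 * s) / 40 := by
    rw [div_eq_iff hc2pos.ne', hc6, hc2]
    linear_combination (-111/400 : ℝ) * hs2
  rw [← hval]
  refine hlim.congr' ?_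
  filter_upwards [eventually_ge_atTop 1] with n hn
  have hn0 : ((n : ℝ)) ≠ 0 := Nat.cast_ne_zero.2 (by omega)
  have hbn : (b : ℝ) ^ n ≠ 0 := pow_ne_zero _ hbpos.ne'
  have key : A n / (↑n * Φ n) = (A n / (↑n * b ^ n)) / (Φ n / b ^ n) :=
    aux_div _ _ _ _ hbn
  rw [eq_comm, key, hA n, hΦ n]
  have hden' : (c1 * a ^ n + c2 * b ^ n) / b ^ n = c1 * r ^ n + c2 := by
    rw [hr, div_pow]
    field_simp
  have hnum' : (-3 + c3 * a ^ n + c5 * ↑n * a ^ n + c4 * b ^ n + c6 * ↑n * b ^ n)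
      / (↑n * b ^ n)
      = (-3) * ((n:ℝ)⁻¹ * (b⁻¹) ^ n) + c3 * (r ^ n * (n:ℝ)⁻¹) + c5 * r ^ n
        + c4 * (n:ℝ)⁻¹ + c6 := by
    rw [hr, div_pow, inv_pow]
    field_simp
  rw [hden', hnum']
end

section
/- Let G, H : ℕ → ℝ[X] satisfy, for all n ≥ 1: G(n) = 2x·G(n−1) + 4x²·H(n−1) and H(n) = (4x²+x)·H(n−1) + x·G(n−2) (for n ≥ 2), with G(0)=1, G(1)=4x²+2x, H(0)=1, H(1)=4x²+x. Then G satisfies G(n) = (4x²+3x)G(n−1) − (8x³+2x²)G(n−2) + 4x³G(n−3) for all n ≥ 3. -/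
open Polynomial

theorem stmt_19 (G H : ℕ → Polynomial ℝ)
    (hG0 : G 0 = 1) (hG1 : G 1 = 4 * X ^ 2 + 2 * X)
    (hH0 : H 0 = 1) (hH1 : H 1 = 4 * X ^ 2 + X)
    (hG : ∀ n, 1 ≤ n → G n = 2 * X * G (n - 1) + 4 * X ^ 2 * H (n - 1))
    (hH : ∀ n, 2 ≤ n → H n = (4 * X ^ 2 + X) * H (n - 1) + X * G (n - 2)) :
    ∀ n, 3 ≤ n → G n = (4 * X ^ 2 + 3 * X) * G (n - 1)
      - (8 * X ^ 3 + 2 * X ^ 2) * G (n - 2) + 4 * X ^ 3 * G (n - 3) := by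
  intro n hn
  obtain ⟨m, rfl⟩ := Nat.exists_eq_add_of_le hn
  have h1 := hG (3 + m) (by omega)
  have h2 := hG (2 + m) (by omega)
  have h3 := hH (2 + m) (by omega)
  have e1 : 3 + m - 1 = 2 + m := by omega
  have e2 : 3 + m - 2 = 1 + m := by omega
  have e3 : 3 + m - 3 = m := by omega
  have e4 : 2 + m - 1 = 1 + m := by omega
  have e5 : 2 + m - 2 = m := by omega
  simp only [e1, e2, e3] at h1 ⊢
  simp only [e4, e5] at h2
  simp only [e4, e5] at h3
  rw [h1, h3]
  have h2' : 4 * X ^ 2 * H (1 + m) = G (2 + m) - 2 * X * G (1 + m) := by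
    rw [h2]; ring
  have : (4:Polynomial ℝ) * X ^ 2 * ((4 * X ^ 2 + X) * H (1 + m) + X * G m)
      = (4 * X ^ 2 + X) * (4 * X ^ 2 * H (1 + m)) + 4 * X ^ 3 * G m := by ring
  rw [this, h2']
  ring
end
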